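/- Assume n ≥ 2. If the constructed threshold instance (H,t) has a harmless set of size at least C(k,2)·(n−1) + k·n + m, where C(k,2) = k(k−1)/2, then the k-partite graph G contains a multicoloured clique on k vertices. -/

import Mathlib

/-- A set `S` is harmless for the threshold instance `(G, t)` if every vertex `v`
has strictly fewer than `t v` neighbours in `S`. -/
def HarmlessSet {W : Type*} (G : SimpleGraph W) (t : W → ℕ) (S : Set W) : Prop :=
  ∀ v : W, (G.neighborSet v ∩ S).ncard < t v

/-- Raw vertices of the constructed graph `H` for the reduction from
Multicoloured Clique: the vertices `a_F`, `b_F`, the dark/light/XOR vertices of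
the selection gadgets, the four port vertices of each port gadget
(`plus : Bool` distinguishes `p⁺` from `p⁻`, `side : Bool` distinguishes the
side `i` from the side `j`), the light/dark/XOR vertices of the test gadgets,
and the apices `a_{ij}`. -/
inductive HVert (k n : ℕ) : Type where
  | aF : HVert k n
  | bF : HVert k n
  | selD : Fin k → Fin n → HVert k n
  | selL : Fin k → Fin n → HVert k n
  | selX : Fin k → Fin n → HVert k n
  | port : Fin k → Fin k → Bool → Bool → HVert k n
  | testL : Fin k → Fin k → Fin n → Fin n → Fin n → HVert k n
  | testD : Fin k → Fin k → Fin n → Fin n → HVert k n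
  | testX : Fin k → Fin k → Fin n → Fin n → Fin n → HVert k n
  | apex : Fin k → Fin k → HVert k n

/-- Which raw vertices actually exist: port gadgets and apices exist for every
pair `i < j`, and the test gadget `T_{xy}` for the pair `i < j` exists precisely
when `v^i_x v^j_y` is an edge of `G` (encoded by the relation `E`). -/
def HValid {k n : ℕ} (E : Fin k → Fin n → Fin k → Fin n → Prop) : HVert k n → Prop
  | .port i j _ _ => i < j
  | .apex i j => i < j
  | .testL i j x y _ => i < j ∧ E i x j y
  | .testD i j x y => i < j ∧ E i x j y
  | .testX i j x y _ => i < j ∧ E i x j y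
  | _ => True

/-- The base adjacency relation of the constructed graph `H` (symmetrised by
`SimpleGraph.fromRel`).  Indices `x y r : Fin n` are 0-based, representing the
paper's 1-based indices `x+1`, `y+1`, `r+1`; so `p⁺` is adjacent to the light
vertex `l_{r+1}` of `T_{(x+1)(y+1)}` iff `r + 1 ≤ n − (x + 1)`,
i.e. `r + x + 2 ≤ n`, and `p⁻` to the remaining light vertices. -/
def hRel {k n : ℕ} : HVert k n → HVert k n → Prop
  | .aF, .bF => True
  | .aF, .selX _ _ => True
  | .aF, .testX _ _ _ _ _ => True
  | .aF, .port _ _ _ _ => True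
  | .aF, .apex _ _ => True
  | .selX i s, .selD i' s' => i = i' ∧ s = s'
  | .selX i s, .selL i' s' => i = i' ∧ s = s'
  | .port i j plus side, .selL i' _ => (if side then j else i) = i' ∧ plus = true
  | .port i j plus side, .selD i' _ => (if side then j else i) = i' ∧ plus = false
  | .port i j plus side, .testL i' j' x y r =>
      i = i' ∧ j = j' ∧
      ((plus = true ∧ (r : ℕ) + (if side then (y : ℕ) else (x : ℕ)) + 2 ≤ n) ∨
       (plus = false ∧ n < (r : ℕ) + (if side then (y : ℕ) else (x : ℕ)) + 2))
  | .testX i j x y _, .testD i' j' x' y' => i = i' ∧ j = j' ∧ x = x' ∧ y = y'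
  | .testX i j x y r, .testL i' j' x' y' r' =>
      i = i' ∧ j = j' ∧ x = x' ∧ y = y' ∧ r = r'
  | .apex i j, .testL i' j' _ _ _ => i = i' ∧ j = j'
  | _, _ => False

/-- The constructed graph `H` of the reduction, on the valid vertices. -/
def HBig {k n : ℕ} (E : Fin k → Fin n → Fin k → Fin n → Prop) :
    SimpleGraph {v : HVert k n // HValid E v} :=
  SimpleGraph.fromRel (fun a b => hRel a.1 b.1)

/-- The threshold function of the constructed instance: `a_F, b_F` get
threshold `1`, the XOR vertices get `2`, ports and apices get `n + 1`, and all
light and dark vertices of selection and test gadgets get their degree plus one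
(so they impose no constraint). -/
noncomputable def hT {k n : ℕ} (E : Fin k → Fin n → Fin k → Fin n → Prop) :
    {v : HVert k n // HValid E v} → ℕ := fun v =>
  match v.1 with
  | .aF => 1
  | .bF => 1
  | .selX _ _ => 2
  | .testX _ _ _ _ _ => 2
  | .port _ _ _ _ => n + 1
  | .apex _ _ => n + 1
  | _ => ((HBig E).neighborSet v).ncard + 1

/-- The total number `m` of edges of the multicoloured-clique instance,
counting each edge once (with its smaller colour first). -/
noncomputable def mTotal {k n : ℕ} (E : Fin k → Fin n → Fin k → Fin n → Prop) : ℕ :=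
  {q : (Fin k × Fin n) × (Fin k × Fin n) |
    q.1.1 < q.2.1 ∧ E q.1.1 q.1.2 q.2.1 q.2.2}.ncard

/-!
A harmless set `S` contains neither `a_F`, `b_F` nor a forbidden vertex, so it lives on the light
and dark vertices of the selection and test gadgets. An XOR gadget admits at most one of its two
ends, so `S` takes at most `n` vertices from each `S_i`. For `i < j`, the apex `a_{ij}` admits at
most `n` light test vertices, and every test gadget one of whose light vertices is in `S` loses its
dark vertex; hence `S` takes at most `m_{ij} + n - 1` vertices from the test gadgets of the pair,
with equality only if all `n` light vertices of a single test gadget `T_{xy}` lie in `S`. The size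
bound forces equality everywhere. The ports `p⁺_i` and `p⁻_i` then see `n - x` and `x` light
vertices of that `T_{xy}`, so thresholds `n + 1` pin the number of light vertices of `S_i` in `S`
to exactly `x`. This number does not depend on the pair, so it selects a multicoloured clique.
-/

open Finset

theorem Set.ncard_inter_preimage_eq_of_sum_le {α β : Type*} [Finite α] [Fintype β]
    {s : Set α} (f : α → β) (B : β → ℕ) (hle : ∀ b, (s ∩ f ⁻¹' {b}).ncard ≤ B b)
    (hsum : ∑ b, B b ≤ s.ncard) (b : β) : (s ∩ f ⁻¹' {b}).ncard = B b := by
  classical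
  obtain ⟨t, rfl⟩ := s.toFinite.exists_finset_coe
  have hfiber (b : β) : ((t : Set α) ∩ f ⁻¹' {b}).ncard = #{a ∈ t | f a = b} := by
    rw [← Set.ncard_coe_finset, Finset.coe_filter]
    rfl
  simp only [hfiber, Set.ncard_coe_finset] at hle hsum ⊢
  refine (Finset.sum_eq_sum_iff_of_le fun b _ => hle b).mp ?_ b (Finset.mem_univ b)
  refine le_antisymm (Finset.sum_le_sum fun b _ => hle b) ?_
  rwa [← Finset.card_eq_sum_card_fiberwise fun a _ => Finset.mem_univ (f a)]

theorem Set.ncard_image_union_image {α β γ : Type*} [Finite α] [Finite β] {f : α → γ}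
    {g : β → γ} (hf : f.Injective) (hg : g.Injective) (hfg : ∀ a b, f a ≠ g b)
    (A : Set α) (B : Set β) : (f '' A ∪ g '' B).ncard = A.ncard + B.ncard := by
  rw [Set.ncard_union_eq, Set.ncard_image_of_injective _ hf, Set.ncard_image_of_injective _ hg]
  exact Set.disjoint_left.mpr fun _ ⟨a, _, ha⟩ ⟨b, _, hb⟩ => hfg a b (ha.trans hb.symm)

theorem Fin.ncard_setOf_val_lt {n : ℕ} (m : ℕ) :
    {r : Fin n | (r : ℕ) < m}.ncard = min n m := by
  classical
  rw [Set.ncard_eq_toFinset_card', Set.toFinset_ofPred, Fin.card_filter_val_lt]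

theorem Fin.ncard_setOf_le_val {n : ℕ} (m : ℕ) :
    {r : Fin n | m ≤ (r : ℕ)}.ncard = n - m := by
  have hcompl : {r : Fin n | m ≤ (r : ℕ)} = {r : Fin n | (r : ℕ) < m}ᶜ := by
    ext r
    simp
  rw [hcompl, Set.ncard_compl, Fin.ncard_setOf_val_lt, Nat.card_eq_fintype_card,
    Fintype.card_fin]
  omega

namespace HVert

variable {k n : ℕ}

def encode : HVert k n →
    Fin 10 × Option (Fin k) × Option (Fin k) × Option (Fin n) × Option (Fin n) ×
      Option (Fin n) × Bool × Bool
  | aF => (0, none, none, none, none, none, false, false)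
  | bF => (1, none, none, none, none, none, false, false)
  | selD i s => (2, some i, none, some s, none, none, false, false)
  | selL i s => (3, some i, none, some s, none, none, false, false)
  | selX i s => (4, some i, none, some s, none, none, false, false)
  | port i j plus side => (5, some i, some j, none, none, none, plus, side)
  | testL i j x y r => (6, some i, some j, some x, some y, some r, false, false)
  | testD i j x y => (7, some i, some j, some x, some y, none, false, false)
  | testX i j x y r => (8, some i, some j, some x, some y, some r, false, false)
  | apex i j => (9, some i, some j, none, none, none, false, false)

theorem encode_injective : Function.Injective (encode : HVert k n → _) := by
  intro a b h
  cases a <;> cases b <;> simp_all [encode]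

instance : Finite (HVert k n) := Finite.of_injective _ encode_injective

theorem testD_injective (i j : Fin k) :
    (fun p : Fin n × Fin n => testD i j p.1 p.2).Injective := by
  intro a b h
  simp only [testD.injEq] at h
  exact Prod.ext h.2.2.1 h.2.2.2

theorem testL_injective (i j : Fin k) :
    (fun q : (Fin n × Fin n) × Fin n => testL i j q.1.1 q.1.2 q.2).Injective := by
  intro a b h
  simp only [testL.injEq] at h
  exact Prod.ext (Prod.ext h.2.2.1 h.2.2.2.1) h.2.2.2.2

def gadget : HVert k n → Option (Fin k ⊕ Fin k × Fin k)
  | selD i _ | selL i _ | selX i _ => some (.inl i)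
  | testL i j _ _ _ | testD i j _ _ | testX i j _ _ _ => some (.inr (i, j))
  | _ => none

theorem lt_of_gadget_eq_inr {E : Fin k → Fin n → Fin k → Fin n → Prop} {v : HVert k n}
    (hv : HValid E v) {i j : Fin k} (h : v.gadget = some (.inr (i, j))) : i < j := by
  cases v <;> simp only [gadget, Option.some.injEq, Sum.inr.injEq, Prod.mk.injEq,
    reduceCtorEq] at h
  all_goals
    obtain ⟨rfl, rfl⟩ := h
    exact hv.1

end HVert

theorem hRel_irrefl {k n : ℕ} (v : HVert k n) : ¬ hRel v v := by
  cases v <;> simp [hRel]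

theorem HBig_adj {k n : ℕ} {E : Fin k → Fin n → Fin k → Fin n → Prop}
    {a b : {v // HValid E v}} :
    (HBig E).Adj a b ↔ a ≠ b ∧ (hRel a.1 b.1 ∨ hRel b.1 a.1) :=
  SimpleGraph.fromRel_adj _ a b

section Counting

variable {k n : ℕ} (E : Fin k → Fin n → Fin k → Fin n → Prop)

noncomputable def edgeCount (i j : Fin k) : ℕ :=
  {p : Fin n × Fin n | E i p.1 j p.2}.ncard

theorem mTotal_eq_sum_edgeCount :
    mTotal E = ∑ p : Fin k × Fin k with p.1 < p.2, edgeCount E p.1 p.2 := by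
  classical
  simp only [mTotal, edgeCount, Set.ncard_eq_toFinset_card', Set.toFinset_ofPred,
    Finset.card_filter, Finset.sum_filter, Fintype.sum_prod_type]
  refine Finset.sum_congr rfl fun i _ => ?_
  rw [Finset.sum_comm]
  refine Finset.sum_congr rfl fun j _ => ?_
  split_ifs with hij <;> simp [hij]

/-- The most vertices a harmless set can take from each gadget. -/
noncomputable def gadgetBound : Option (Fin k ⊕ Fin k × Fin k) → ℕ
  | none => 0
  | some (.inl _) => n
  | some (.inr (i, j)) => if i < j then edgeCount E i j + (n - 1) else 0

theorem sum_gadgetBound :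
    ∑ b, gadgetBound E b = k.choose 2 * (n - 1) + k * n + mTotal E := by
  simp only [Fintype.sum_option, Fintype.sum_sum_type, gadgetBound, Finset.sum_const,
    Finset.card_univ, Fintype.card_fin, smul_eq_mul, ← Finset.sum_filter,
    Finset.sum_add_distrib, Fintype.card_product_filter_lt, mTotal_eq_sum_edgeCount]
  ring

end Counting

section Harmless

variable {k n : ℕ} {E : Fin k → Fin n → Fin k → Fin n → Prop}
  {S : Set {v : HVert k n // HValid E v}}

def selDarkIn (S : Set {v : HVert k n // HValid E v}) (i : Fin k) : Set (Fin n) :=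
  {s | HVert.selD i s ∈ Subtype.val '' S}

def selLightIn (S : Set {v : HVert k n // HValid E v}) (i : Fin k) : Set (Fin n) :=
  {s | HVert.selL i s ∈ Subtype.val '' S}

def testDarkIn (S : Set {v : HVert k n // HValid E v}) (i j : Fin k) : Set (Fin n × Fin n) :=
  {p | HVert.testD i j p.1 p.2 ∈ Subtype.val '' S}

def testLightIn (S : Set {v : HVert k n // HValid E v}) (i j : Fin k) :
    Set ((Fin n × Fin n) × Fin n) :=
  {q | HVert.testL i j q.1.1 q.1.2 q.2 ∈ Subtype.val '' S}

theorem HValid.of_mem_image_val {v : HVert k n} (hv : v ∈ Subtype.val '' S) : HValid E v := by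
  obtain ⟨w, -, rfl⟩ := hv
  exact w.2

theorem HarmlessSet.ncard_lt_hT (hH : HarmlessSet (HBig E) (hT E) S) (p : {v // HValid E v})
    {X : Set (HVert k n)} (hXS : X ⊆ Subtype.val '' S)
    (hX : ∀ v ∈ X, hRel p.1 v ∨ hRel v p.1) :
    X.ncard < hT E p := by
  have hsub : X ⊆ Subtype.val '' ((HBig E).neighborSet p ∩ S) := by
    intro v hv
    obtain ⟨w, hwS, rfl⟩ := hXS hv
    have hne : p ≠ w := by
      rintro rfl
      exact (hX _ hv).elim (hRel_irrefl _) (hRel_irrefl _)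
    exact ⟨w, ⟨HBig_adj.mpr ⟨hne, hX _ hv⟩, hwS⟩, rfl⟩
  calc X.ncard ≤ (Subtype.val '' ((HBig E).neighborSet p ∩ S)).ncard :=
        Set.ncard_le_ncard hsub (Set.toFinite _)
    _ = ((HBig E).neighborSet p ∩ S).ncard :=
        Set.ncard_image_of_injective _ Subtype.val_injective
    _ < hT E p := hH p

theorem HarmlessSet.notMem_of_hT_eq_one (hH : HarmlessSet (HBig E) (hT E) S)
    {p : {v // HValid E v}} (hp : hT E p = 1) {v : HVert k n}
    (hv : hRel p.1 v ∨ hRel v p.1) : v ∉ Subtype.val '' S := fun hvS => by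
  have := hH.ncard_lt_hT p (Set.singleton_subset_iff.mpr hvS) (by simpa using hv)
  simp [hp] at this

theorem HarmlessSet.eq_of_hT_eq_two (hH : HarmlessSet (HBig E) (hT E) S)
    {p : {v // HValid E v}} (hp : hT E p = 2) {u w : HVert k n}
    (hu : hRel p.1 u) (hw : hRel p.1 w) (huS : u ∈ Subtype.val '' S)
    (hwS : w ∈ Subtype.val '' S) : u = w := by
  by_contra hne
  have := hH.ncard_lt_hT p (Set.insert_subset huS (Set.singleton_subset_iff.mpr hwS))
    (by simp [hu, hw])
  rw [Set.ncard_pair hne, hp] at this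
  exact lt_irrefl _ this

theorem HarmlessSet.notMem_of_forbidden (hH : HarmlessSet (HBig E) (hT E) S) {v : HVert k n}
    (hv : hRel .aF v) : v ∉ Subtype.val '' S :=
  hH.notMem_of_hT_eq_one (p := ⟨.aF, trivial⟩) rfl (.inl hv)

theorem HarmlessSet.aF_notMem (hH : HarmlessSet (HBig E) (hT E) S) :
    .aF ∉ Subtype.val '' S :=
  hH.notMem_of_hT_eq_one (p := ⟨.bF, trivial⟩) rfl (.inr trivial)

theorem HarmlessSet.gadget_ne_none (hH : HarmlessSet (HBig E) (hT E) S) {v : HVert k n}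
    (hv : v ∈ Subtype.val '' S) : v.gadget ≠ none := by
  cases v
  case aF => exact absurd hv hH.aF_notMem
  case bF | port | apex => exact absurd hv (hH.notMem_of_forbidden (by trivial))
  all_goals simp [HVert.gadget]

theorem HarmlessSet.disjoint_selDarkIn_selLightIn (hH : HarmlessSet (HBig E) (hT E) S)
    (i : Fin k) : Disjoint (selDarkIn S i) (selLightIn S i) :=
  Set.disjoint_left.mpr fun s hD hL => by
    simpa using hH.eq_of_hT_eq_two (p := ⟨.selX i s, trivial⟩) (u := .selD i s)
      (w := .selL i s) rfl ⟨rfl, rfl⟩ ⟨rfl, rfl⟩ hD hL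

theorem HarmlessSet.ncard_selDarkIn_add_ncard_selLightIn_le
    (hH : HarmlessSet (HBig E) (hT E) S) (i : Fin k) :
    (selDarkIn S i).ncard + (selLightIn S i).ncard ≤ n := by
  rw [← Set.ncard_union_eq (hH.disjoint_selDarkIn_selLightIn i)]
  simpa using Set.ncard_le_card (_ : Set (Fin n))

theorem HarmlessSet.ncard_selGadget_le (hH : HarmlessSet (HBig E) (hT E) S) (i : Fin k) :
    (Subtype.val '' S ∩ HVert.gadget ⁻¹' {some (.inl i)}).ncard ≤
      (selDarkIn S i).ncard + (selLightIn S i).ncard := by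
  rw [← Set.ncard_image_union_image (f := HVert.selD i) (g := HVert.selL i)
    (fun _ _ h => (HVert.selD.inj h).2) (fun _ _ h => (HVert.selL.inj h).2) (by simp)]
  refine Set.ncard_le_ncard ?_ (Set.toFinite _)
  rintro v ⟨hvS, hv⟩
  cases v <;> simp only [HVert.gadget, Set.mem_preimage, Set.mem_singleton_iff,
    Option.some.injEq, Sum.inl.injEq, reduceCtorEq] at hv
  case selD => exact .inl ⟨_, hv ▸ hvS, hv ▸ rfl⟩
  case selL => exact .inr ⟨_, hv ▸ hvS, hv ▸ rfl⟩
  case selX => exact absurd hvS (hH.notMem_of_forbidden trivial)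

theorem HarmlessSet.ncard_testGadget_le (hH : HarmlessSet (HBig E) (hT E) S) (i j : Fin k) :
    (Subtype.val '' S ∩ HVert.gadget ⁻¹' {some (.inr (i, j))}).ncard ≤
      (testDarkIn S i j).ncard + (testLightIn S i j).ncard := by
  rw [← Set.ncard_image_union_image (HVert.testD_injective i j) (HVert.testL_injective i j)
    (by simp)]
  refine Set.ncard_le_ncard ?_ (Set.toFinite _)
  rintro v ⟨hvS, hv⟩
  cases v <;> simp only [HVert.gadget, Set.mem_preimage, Set.mem_singleton_iff,
    Option.some.injEq, Sum.inr.injEq, Prod.mk.injEq, reduceCtorEq] at hv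
  case testD x y =>
    obtain ⟨rfl, rfl⟩ := hv
    exact .inl ⟨(x, y), hvS, rfl⟩
  case testL x y r =>
    obtain ⟨rfl, rfl⟩ := hv
    exact .inr ⟨((x, y), r), hvS, rfl⟩
  case testX => exact absurd hvS (hH.notMem_of_forbidden trivial)

theorem HarmlessSet.ncard_testDarkIn_add_le (hH : HarmlessSet (HBig E) (hT E) S)
    (i j : Fin k) :
    (testDarkIn S i j).ncard + (Prod.fst '' testLightIn S i j).ncard ≤ edgeCount E i j := by
  rw [← Set.ncard_union_eq]
  · refine Set.ncard_le_ncard ?_ (Set.toFinite _)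
    rintro p (hD | ⟨q, hL, rfl⟩)
    · exact (HValid.of_mem_image_val hD).2
    · exact (HValid.of_mem_image_val hL).2
  · refine Set.disjoint_left.mpr ?_
    rintro _ hD ⟨⟨p, r⟩, hL, rfl⟩
    have hvalid : HValid E (.testX i j p.1 p.2 r) :=
      HValid.of_mem_image_val (v := .testD i j p.1 p.2) hD
    simpa using hH.eq_of_hT_eq_two (p := ⟨.testX i j p.1 p.2 r, hvalid⟩)
      (u := .testD i j p.1 p.2) (w := .testL i j p.1 p.2 r) rfl
      ⟨rfl, rfl, rfl, rfl⟩ ⟨rfl, rfl, rfl, rfl, rfl⟩ hD hL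

theorem HarmlessSet.ncard_testLightIn_le (hH : HarmlessSet (HBig E) (hT E) S) {i j : Fin k}
    (hij : i < j) : (testLightIn S i j).ncard ≤ n := by
  rw [← Nat.lt_succ_iff, ← Set.ncard_image_of_injective _ (HVert.testL_injective i j)]
  refine hH.ncard_lt_hT ⟨.apex i j, hij⟩ ?_ ?_
  · rintro _ ⟨q, hq, rfl⟩
    exact hq
  · rintro _ ⟨q, -, rfl⟩
    exact .inl ⟨rfl, rfl⟩

theorem HarmlessSet.ncard_testGadget_le_edgeCount (hH : HarmlessSet (HBig E) (hT E) S)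
    (i j : Fin k) :
    (Subtype.val '' S ∩ HVert.gadget ⁻¹' {some (.inr (i, j))}).ncard ≤
      edgeCount E i j + (n - 1) := by
  have hgadget := hH.ncard_testGadget_le i j
  have hdark := hH.ncard_testDarkIn_add_le i j
  rcases (testLightIn S i j).eq_empty_or_nonempty with hL | ⟨q, hq⟩
  · rw [hL, Set.ncard_empty] at hgadget
    omega
  · have hlight := hH.ncard_testLightIn_le (HValid.of_mem_image_val hq).1
    have htouched : 0 < (Prod.fst '' testLightIn S i j).ncard :=
      (Set.ncard_pos (Set.toFinite _)).mpr ⟨q.1, q, hq, rfl⟩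
    omega

theorem HarmlessSet.exists_full_test (hH : HarmlessSet (HBig E) (hT E) S) (hn : 2 ≤ n)
    (i j : Fin k) (h : edgeCount E i j + (n - 1) ≤
      (Subtype.val '' S ∩ HVert.gadget ⁻¹' {some (.inr (i, j))}).ncard) :
    ∃ x y, E i x j y ∧ ∀ r, HVert.testL i j x y r ∈ Subtype.val '' S := by
  have hgadget := hH.ncard_testGadget_le i j
  have hdark := hH.ncard_testDarkIn_add_le i j
  set L := testLightIn S i j
  obtain ⟨q, hq⟩ : L.Nonempty := by
    refine Set.nonempty_iff_ne_empty.mpr fun hL => ?_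
    rw [hL, Set.ncard_empty] at hgadget
    omega
  have hlight : L.ncard ≤ n := hH.ncard_testLightIn_le (HValid.of_mem_image_val hq).1
  have htouched : Prod.fst '' L = {q.1} := by
    have hone : (Prod.fst '' L).ncard = 1 :=
      le_antisymm (by omega) ((Set.ncard_pos (Set.toFinite _)).mpr ⟨q.1, q, hq, rfl⟩)
    obtain ⟨p, hp⟩ := Set.ncard_eq_one.mp hone
    have hq1 : q.1 ∈ ({p} : Set (Fin n × Fin n)) := hp ▸ ⟨q, hq, rfl⟩
    rw [hp, Set.mem_singleton_iff.mp hq1]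
  have hfull : L = {q.1} ×ˢ Set.univ := by
    refine Set.eq_of_subset_of_ncard_le
      (fun q' hq' => ⟨htouched ▸ ⟨q', hq', rfl⟩, trivial⟩) ?_
    rw [htouched, Set.ncard_singleton] at hdark
    simp only [Set.ncard_prod, Set.ncard_singleton, Set.ncard_univ, Nat.card_eq_fintype_card,
      Fintype.card_fin, one_mul]
    omega
  exact ⟨q.1.1, q.1.2, (HValid.of_mem_image_val hq).2,
    fun r => (hfull ▸ ⟨rfl, trivial⟩ : (q.1, r) ∈ L)⟩

theorem HarmlessSet.ncard_inter_gadget_le (hH : HarmlessSet (HBig E) (hT E) S)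
    (b : Option (Fin k ⊕ Fin k × Fin k)) :
    (Subtype.val '' S ∩ HVert.gadget ⁻¹' {b}).ncard ≤ gadgetBound E b := by
  rcases b with _ | i | ⟨i, j⟩
  · rw [gadgetBound, nonpos_iff_eq_zero, Set.ncard_eq_zero]
    exact Set.eq_empty_of_forall_notMem fun v ⟨hv, hg⟩ => hH.gadget_ne_none hv hg
  · exact (hH.ncard_selGadget_le i).trans (hH.ncard_selDarkIn_add_ncard_selLightIn_le i)
  · by_cases hij : i < j
    · simpa [gadgetBound, hij] using hH.ncard_testGadget_le_edgeCount i j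
    · rw [gadgetBound, if_neg hij, nonpos_iff_eq_zero, Set.ncard_eq_zero]
      exact Set.eq_empty_of_forall_notMem fun v ⟨hv, hg⟩ =>
        hij (HVert.lt_of_gadget_eq_inr (HValid.of_mem_image_val hv) hg)

theorem HarmlessSet.ncard_selLightIn_eq_of_full_test (hH : HarmlessSet (HBig E) (hT E) S)
    {i j : Fin k} (hij : i < j) {x y : Fin n} (side : Bool)
    (hfull : ∀ r, HVert.testL i j x y r ∈ Subtype.val '' S)
    (hsel : (selDarkIn S (if side then j else i)).ncard +
      (selLightIn S (if side then j else i)).ncard = n) :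
    (selLightIn S (if side then j else i)).ncard = (if side then (y : ℕ) else (x : ℕ)) + 1 := by
  set c : ℕ := if side then (y : ℕ) else (x : ℕ)
  have hc : c < n := by cases side <;> simp [c]
  have hport (plus : Bool) (f : Fin n → HVert k n) (hf : f.Injective)
      (hfL : ∀ s r, f s ≠ .testL i j x y r) (A R : Set (Fin n))
      (hA : ∀ s ∈ A, f s ∈ Subtype.val '' S ∧ hRel (.port i j plus side) (f s))
      (hR : ∀ r ∈ R, hRel (.port i j plus side) (.testL i j x y r)) :
      A.ncard + R.ncard ≤ n := by
    rw [← Nat.lt_succ_iff,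
      ← Set.ncard_image_union_image hf (fun _ _ h => (HVert.testL.inj h).2.2.2.2) hfL]
    refine hH.ncard_lt_hT ⟨.port i j plus side, hij⟩ ?_ ?_
    · rintro _ (⟨s, hs, rfl⟩ | ⟨r, -, rfl⟩)
      exacts [(hA s hs).1, hfull r]
    · rintro _ (⟨s, hs, rfl⟩ | ⟨r, hr, rfl⟩)
      exacts [.inl (hA s hs).2, .inl (hR r hr)]
  have hplus := hport true (.selL _) (fun _ _ h => (HVert.selL.inj h).2) (by simp)
    (selLightIn S (if side then j else i)) {r | (r : ℕ) < n - (c + 1)}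
    (fun s hs => ⟨hs, rfl, rfl⟩)
    (fun r hr => ⟨rfl, rfl, .inl ⟨rfl, by simp only [Set.mem_ofPred_eq] at hr; omega⟩⟩)
  have hminus := hport false (.selD _) (fun _ _ h => (HVert.selD.inj h).2) (by simp)
    (selDarkIn S (if side then j else i)) {r | n - (c + 1) ≤ (r : ℕ)}
    (fun s hs => ⟨hs, rfl, rfl⟩)
    (fun r hr => ⟨rfl, rfl, .inr ⟨rfl, by simp only [Set.mem_ofPred_eq] at hr; omega⟩⟩)
  rw [Fin.ncard_setOf_val_lt] at hplus
  rw [Fin.ncard_setOf_le_val] at hminus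
  omega

end Harmless

theorem harmless_to_multicolouredClique_general (k n : ℕ) (hn : 2 ≤ n)
    (E : Fin k → Fin n → Fin k → Fin n → Prop)
    (hsymm : ∀ i x j y, E i x j y → E j y i x)
    (hS : ∃ S : Set {v : HVert k n // HValid E v},
      HarmlessSet (HBig E) (hT E) S ∧
      Nat.choose k 2 * (n - 1) + k * n + mTotal E ≤ S.ncard) :
    ∃ c : Fin k → Fin n, ∀ i j : Fin k, i ≠ j → E i (c i) j (c j) := by
  obtain ⟨S, hH, hcard⟩ := hS
  have htight := Set.ncard_inter_preimage_eq_of_sum_le HVert.gadget (gadgetBound E)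
    hH.ncard_inter_gadget_le
    (by rwa [sum_gadgetBound, Set.ncard_image_of_injective _ Subtype.val_injective])
  have hsel (i : Fin k) : (selDarkIn S i).ncard + (selLightIn S i).ncard = n :=
    le_antisymm (hH.ncard_selDarkIn_add_ncard_selLightIn_le i)
      ((htight _).symm.trans_le (hH.ncard_selGadget_le i))
  have hpair {i j : Fin k} (hij : i < j) : ∃ x y, E i x j y ∧
      (selLightIn S i).ncard = x + 1 ∧ (selLightIn S j).ncard = y + 1 := by
    obtain ⟨x, y, hE, hfull⟩ :=
      hH.exists_full_test hn i j (by simp [htight, gadgetBound, hij])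
    refine ⟨x, y, hE, ?_, ?_⟩
    · simpa using hH.ncard_selLightIn_eq_of_full_test hij false hfull (by simpa using hsel i)
    · simpa using hH.ncard_selLightIn_eq_of_full_test hij true hfull (by simpa using hsel j)
  refine ⟨fun i => ⟨(selLightIn S i).ncard - 1, ?_⟩, ?_⟩
  · have := Set.ncard_le_card (selLightIn S i)
    rw [Nat.card_eq_fintype_card, Fintype.card_fin] at this
    omega
  intro i j hne
  wlog hij : i < j generalizing i j
  · exact hsymm _ _ _ _ (this j i hne.symm (lt_of_le_of_ne (not_lt.mp hij) hne.symm))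
  obtain ⟨x, y, hE, hx, hy⟩ := hpair hij
  convert hE <;> ext <;> dsimp only <;> omega

/-- Soundness: if (for `n ≥ 2`) the constructed instance `(H, t)` has a harmless
set of size at least `C(k,2)·(n−1) + k·n + m`, then `G` contains a
multicoloured clique on `k` vertices. -/
theorem harmless_to_multicolouredClique (k n : ℕ) (hk : 2 ≤ k) (hn : 2 ≤ n)
    (E : Fin k → Fin n → Fin k → Fin n → Prop)
    (hsymm : ∀ i x j y, E i x j y → E j y i x)
    (hpart : ∀ i x j y, E i x j y → i ≠ j)
    (hS : ∃ S : Set {v : HVert k n // HValid E v},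
      HarmlessSet (HBig E) (hT E) S ∧
      Nat.choose k 2 * (n - 1) + k * n + mTotal E ≤ S.ncard) :
    ∃ c : Fin k → Fin n, ∀ i j : Fin k, i ≠ j → E i (c i) j (c j) :=
  harmless_to_multicolouredClique_general k n hn E hsymm hS
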